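/- Let a : ℤⁿ × 𝕋^{nr} → ℂ be such that T_a : ℓ^{p₁}(ℤⁿ)×⋯×ℓ^{p_r}(ℤⁿ) → ℓ^{p}(ℤⁿ) is a nuclear multilinear operator. Then the function x ↦ ‖ ∫_{𝕋^{nr}} a(x,ξ) e^{2πi(x̃-ℓ)·ξ} dξ ‖_{ℓ^{p₁'}(ℤⁿ_{ℓ₁})×⋯×ℓ^{p_r'}(ℤⁿ_{ℓ_r})} belongs to ℓ^p(ℤⁿ). -/

import Mathlib

/-!
Testing the nuclear representation of `T_a` against the Dirac masses `f_j = δ_{ℓ_j}` shows that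
the kernel `K(x, ℓ) = ∫ a(x,ξ) e^{2πi(x̃-ℓ)·ξ} dξ` equals `∑_k h_k(x) ∏_j g_{kj}(ℓ_j)`.
Minkowski's inequality for countable sums, applied in each variable of the mixed norm and then
in `x`, bounds the `ℓ^p`-norm of `x ↦ ‖K(x, ·)‖` by `∑_k ‖h_k‖_p ∏_j ‖g_{kj}‖_{p_j'}`,
which is finite by nuclearity.
-/

open MeasureTheory Real
open scoped ENNReal NNReal

/-- The `ℓ^q`-norm (with `q ∈ [1,∞]`) of an `ℝ≥0∞`-valued sequence on `ℤⁿ`. -/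
noncomputable def elp (n : ℕ) (q : ℝ≥0∞) (F : (Fin n → ℤ) → ℝ≥0∞) : ℝ≥0∞ :=
  if q = ⊤ then ⨆ x, F x else (∑' x, F x ^ q.toReal) ^ (1 / q.toReal)

/-- The iterated mixed norm `‖⋯‖‖F(·,ℓ₂,…,ℓ_k)‖_{ℓ^{q₁}}‖_{ℓ^{q₂}}⋯‖_{ℓ^{q_k}}`. -/
noncomputable def mixedNorm (n : ℕ) :
    (k : ℕ) → (Fin k → ℝ≥0∞) → ((Fin k → Fin n → ℤ) → ℝ≥0∞) → ℝ≥0∞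
  | 0, _, F => F Fin.elim0
  | (k + 1), q, F => mixedNorm n k (fun i => q i.succ)
      (fun ℓ => elp n (q 0) fun z => F (Fin.cons z ℓ))

namespace MeasureTheory

variable {α : Type*} [MeasurableSpace α] {μ : Measure α} {p : ℝ≥0∞}

theorem eLpNorm_iSup_of_monotone {F : ℕ → α → ℝ≥0∞} (hF : ∀ N, AEMeasurable (F N) μ)
    (hmono : Monotone F) :
    eLpNorm (fun x => ⨆ N, F N x) p μ = ⨆ N, eLpNorm (F N) p μ := by
  refine le_antisymm ?_ (iSup_le fun N => eLpNorm_mono_enorm fun x => le_iSup (F · x) N)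
  rcases eq_or_ne p 0 with rfl | hp0
  · simp
  rcases eq_or_ne p ⊤ with rfl | hpt
  · simp only [eLpNorm_exponent_top]
    refine essSup_le_of_ae_le _ ?_
    filter_upwards [ae_all_iff.2 fun N => ae_le_eLpNormEssSup (f := F N) (μ := μ)] with x hx
    exact iSup_mono hx
  have ht : 0 < p.toReal := ENNReal.toReal_pos hp0 hpt
  simp only [eLpNorm_eq_eLpNorm' hp0 hpt, eLpNorm', enorm_eq_self]
  refine le_of_eq ?_
  calc (∫⁻ x, (⨆ N, F N x) ^ p.toReal ∂μ) ^ (1 / p.toReal)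
      = (⨆ N, ∫⁻ x, F N x ^ p.toReal ∂μ) ^ (1 / p.toReal) := by
        simp_rw [← ENNReal.orderIsoRpow_apply p.toReal ht, OrderIso.map_iSup,
          ENNReal.orderIsoRpow_apply]
        rw [lintegral_iSup' (fun N => (hF N).pow_const _)
          (.of_forall fun x _ _ hNM => ENNReal.rpow_le_rpow (hmono hNM x) ht.le)]
    _ = ⨆ N, (∫⁻ x, F N x ^ p.toReal ∂μ) ^ (1 / p.toReal) :=
        OrderIso.map_iSup (ENNReal.orderIsoRpow _ (one_div_pos.2 ht)) _

theorem eLpNorm_tsum_le {f : ℕ → α → ℝ≥0∞} (hf : ∀ n, AEMeasurable (f n) μ) (hp : 1 ≤ p) :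
    eLpNorm (fun x => ∑' n, f n x) p μ ≤ ∑' n, eLpNorm (f n) p μ := by
  simp_rw [ENNReal.tsum_eq_iSup_nat]
  rw [eLpNorm_iSup_of_monotone (F := fun N x => ∑ n ∈ Finset.range N, f n x)
    (fun N => Finset.aemeasurable_fun_sum _ fun n _ => hf n)
    fun N M hNM x => Finset.sum_le_sum_of_subset (Finset.range_subset_range.2 hNM)]
  refine iSup_mono fun N => ?_
  rw [← Finset.sum_fn]
  exact eLpNorm_sum_le (fun n _ => (hf n).aestronglyMeasurable) hp

theorem memLp_single_count [MeasurableSingletonClass α] [DecidableEq α] {E : Type*}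
    [NormedAddCommGroup E] (z : α) (c : E) : MemLp (Pi.single z c) p Measure.count := by
  simpa using memLp_indicator_const p (measurableSet_singleton z) c (.inr (by simp))

end MeasureTheory

section SequenceNorms

variable {n : ℕ} {q : ℝ≥0∞}

theorem elp_eq_eLpNorm (hq : q ≠ 0) (F : (Fin n → ℤ) → ℝ≥0∞) :
    elp n q F = eLpNorm F q Measure.count := by
  rcases eq_or_ne q ⊤ with rfl | hqt
  · simp [elp, eLpNorm_exponent_top]
  · simp [elp, hqt, eLpNorm_eq_lintegral_rpow_enorm_toReal hq hqt, lintegral_count]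

theorem elp_enorm_eq_eLpNorm {E : Type*} [NormedAddCommGroup E] (hq : q ≠ 0)
    (f : (Fin n → ℤ) → E) : elp n q (fun y => ‖f y‖ₑ) = eLpNorm f q Measure.count := by
  rw [elp_eq_eLpNorm hq, eLpNorm_enorm]

theorem elp_mono {F G : (Fin n → ℤ) → ℝ≥0∞} (h : ∀ x, F x ≤ G x) : elp n q F ≤ elp n q G := by
  unfold elp
  split_ifs
  · exact iSup_mono h
  · gcongr with x
    exact h x

theorem elp_tsum_le (hq : 1 ≤ q) (F : ℕ → (Fin n → ℤ) → ℝ≥0∞) :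
    elp n q (fun x => ∑' m, F m x) ≤ ∑' m, elp n q (F m) := by
  simp only [elp_eq_eLpNorm (one_pos.trans_le hq).ne']
  exact eLpNorm_tsum_le (fun m => (measurable_of_countable _).aemeasurable) hq

theorem elp_const_mul (hq : q ≠ 0) (c : ℝ≥0∞) (F : (Fin n → ℤ) → ℝ≥0∞) :
    elp n q (fun x => c * F x) = c * elp n q F := by
  unfold elp
  split_ifs with hqt
  · exact (ENNReal.mul_iSup _ _).symm
  have ht : 0 < q.toReal := ENNReal.toReal_pos hq hqt
  simp_rw [ENNReal.mul_rpow_of_nonneg _ _ ht.le, ENNReal.tsum_mul_left,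
    ENNReal.mul_rpow_of_nonneg _ _ (one_div_pos.2 ht).le, ← ENNReal.rpow_mul,
    mul_one_div_cancel ht.ne', ENNReal.rpow_one]

end SequenceNorms

section MixedNorms

variable {n : ℕ}

theorem mixedNorm_mono {k : ℕ} {q : Fin k → ℝ≥0∞} {F G : (Fin k → Fin n → ℤ) → ℝ≥0∞}
    (h : ∀ ℓ, F ℓ ≤ G ℓ) : mixedNorm n k q F ≤ mixedNorm n k q G := by
  induction k with
  | zero => exact h _
  | succ k ih => exact ih fun ℓ => elp_mono fun z => h _

theorem mixedNorm_tsum_le {k : ℕ} {q : Fin k → ℝ≥0∞} (hq : ∀ i, 1 ≤ q i)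
    (F : ℕ → (Fin k → Fin n → ℤ) → ℝ≥0∞) :
    mixedNorm n k q (fun ℓ => ∑' m, F m ℓ) ≤ ∑' m, mixedNorm n k q (F m) := by
  induction k with
  | zero => exact le_rfl
  | succ k ih =>
    exact (mixedNorm_mono fun ℓ => elp_tsum_le (hq 0) _).trans (ih (fun i => hq i.succ) _)

theorem mixedNorm_const_mul_prod {k : ℕ} {q : Fin k → ℝ≥0∞} (hq : ∀ i, q i ≠ 0) (c : ℝ≥0∞)
    (G : Fin k → (Fin n → ℤ) → ℝ≥0∞) :
    mixedNorm n k q (fun ℓ => c * ∏ j, G j (ℓ j)) = c * ∏ j, elp n (q j) (G j) := by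
  induction k generalizing c with
  | zero => simp [mixedNorm]
  | succ k ih =>
    have hfirst : ∀ ℓ : Fin k → Fin n → ℤ,
        elp n (q 0) (fun z => c * ∏ j, G j ((Fin.cons z ℓ : Fin (k + 1) → Fin n → ℤ) j))
          = (c * elp n (q 0) (G 0)) * ∏ j : Fin k, G j.succ (ℓ j) := by
      intro ℓ
      have hsplit : (fun z => c * ∏ j, G j ((Fin.cons z ℓ : Fin (k + 1) → Fin n → ℤ) j))
          = fun z => (c * ∏ j : Fin k, G j.succ (ℓ j)) * G 0 z := by
        funext z
        simp only [Fin.prod_univ_succ, Fin.cons_zero, Fin.cons_succ]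
        ring
      rw [hsplit, elp_const_mul (hq 0)]
      ring
    simp only [mixedNorm, hfirst]
    rw [ih (fun i => hq i.succ), Fin.prod_univ_succ]
    ring

end MixedNorms

section NuclearKernel

variable {n r : ℕ}

theorem mixedNorm_enorm_le_of_eq_tsum {q : Fin r → ℝ≥0∞} (hq : ∀ j, 1 ≤ q j)
    {K : (Fin r → Fin n → ℤ) → ℂ} {c : ℕ → ℂ} {g : ℕ → Fin r → (Fin n → ℤ) → ℂ}
    (hK : ∀ ℓ, K ℓ = ∑' k, (∏ j, g k j (ℓ j)) * c k) :
    mixedNorm n r q (fun ℓ => ‖K ℓ‖ₑ)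
      ≤ ∑' k, (∏ j, eLpNorm (g k j) (q j) Measure.count) * ‖c k‖ₑ := by
  have hq0 : ∀ j, q j ≠ 0 := fun j => (one_pos.trans_le (hq j)).ne'
  calc mixedNorm n r q (fun ℓ => ‖K ℓ‖ₑ)
      ≤ mixedNorm n r q (fun ℓ => ∑' k, ‖c k‖ₑ * ∏ j, ‖g k j (ℓ j)‖ₑ) :=
        mixedNorm_mono fun ℓ => by
          rw [hK]
          refine enorm_tsum_le_tsum_enorm.trans_eq (tsum_congr fun k => ?_)
          rw [enorm_mul, mul_comm]
          simp only [enorm_eq_nnnorm, nnnorm_prod, ENNReal.ofNNReal_finsetProd]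
    _ ≤ ∑' k, mixedNorm n r q (fun ℓ => ‖c k‖ₑ * ∏ j, ‖g k j (ℓ j)‖ₑ) :=
        mixedNorm_tsum_le hq _
    _ = _ := tsum_congr fun k => by
        rw [mixedNorm_const_mul_prod hq0 _ fun j y => ‖g k j y‖ₑ, mul_comm]
        simp_rw [elp_enorm_eq_eLpNorm (hq0 _)]

theorem elp_mixedNorm_le_of_eq_tsum {p : ℝ≥0∞} {q : Fin r → ℝ≥0∞} (hp : 1 ≤ p)
    (hq : ∀ j, 1 ≤ q j) {K : (Fin n → ℤ) → (Fin r → Fin n → ℤ) → ℂ}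
    {h : ℕ → (Fin n → ℤ) → ℂ} {g : ℕ → Fin r → (Fin n → ℤ) → ℂ}
    (hK : ∀ x ℓ, K x ℓ = ∑' k, (∏ j, g k j (ℓ j)) * h k x) :
    elp n p (fun x => mixedNorm n r q fun ℓ => ‖K x ℓ‖ₑ)
      ≤ ∑' k, eLpNorm (h k) p Measure.count * ∏ j, eLpNorm (g k j) (q j) Measure.count := by
  have hp0 : p ≠ 0 := (one_pos.trans_le hp).ne'
  calc elp n p (fun x => mixedNorm n r q fun ℓ => ‖K x ℓ‖ₑ)
      ≤ elp n p (fun x => ∑' k, (∏ j, eLpNorm (g k j) (q j) Measure.count) * ‖h k x‖ₑ) :=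
        elp_mono fun x => mixedNorm_enorm_le_of_eq_tsum hq (hK x)
    _ ≤ ∑' k, elp n p (fun x => (∏ j, eLpNorm (g k j) (q j) Measure.count) * ‖h k x‖ₑ) :=
        elp_tsum_le hp _
    _ = _ := tsum_congr fun k => by
        rw [elp_const_mul hp0, elp_enorm_eq_eLpNorm hp0, mul_comm]

theorem cexp_phase_sub (x : Fin n → ℤ) (ℓ : Fin r → Fin n → ℤ) (ξ : Fin r → Fin n → ℝ) :
    Complex.exp (2 * π * Complex.I * ((∑ j, ∑ i, ((x i - ℓ j i : ℤ) : ℝ) * ξ j i : ℝ) : ℂ)) =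
      Complex.exp (2 * π * Complex.I * ((∑ j, ∑ i, (x i : ℝ) * ξ j i : ℝ) : ℂ)) *
        ∏ j, Complex.exp (-2 * π * Complex.I * ((∑ i, (ℓ j i : ℝ) * ξ j i : ℝ) : ℂ)) := by
  rw [← Complex.exp_sum, ← Complex.exp_add]
  congr 1
  push_cast
  simp only [Finset.mul_sum, ← Finset.sum_add_distrib]
  refine Finset.sum_congr rfl fun j _ => Finset.sum_congr rfl fun i _ => ?_
  ring

theorem integral_mul_cexp_eq_tsum_of_nuclear {μ : Measure (Fin r → Fin n → ℝ)}
    {pj : Fin r → ℝ≥0∞} {a : (Fin r → Fin n → ℝ) → ℂ} {x : Fin n → ℤ}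
    {h : ℕ → (Fin n → ℤ) → ℂ} {g : ℕ → Fin r → (Fin n → ℤ) → ℂ}
    (hrep : ∀ f : Fin r → (Fin n → ℤ) → ℂ, (∀ j, MemLp (f j) (pj j) Measure.count) →
      ∫ η, Complex.exp (2 * π * Complex.I * ((∑ j, ∑ i, (x i : ℝ) * η j i : ℝ) : ℂ)) * a η *
          ∏ j, ∑' k : Fin n → ℤ,
            Complex.exp (-2 * π * Complex.I * ((∑ i, (k i : ℝ) * η j i : ℝ) : ℂ)) * f j k ∂μ
        = ∑' k, (∏ j, ∑' y : Fin n → ℤ, f j y * g k j y) * h k x)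
    (ℓ : Fin r → Fin n → ℤ) :
    ∫ ξ, a ξ * Complex.exp (2 * π * Complex.I *
        ((∑ j, ∑ i, ((x i - ℓ j i : ℤ) : ℝ) * ξ j i : ℝ) : ℂ)) ∂μ
      = ∑' k, (∏ j, g k j (ℓ j)) * h k x := by
  have hδ := hrep (fun j => Pi.single (ℓ j) 1) fun j => memLp_single_count _ _
  simp only [Pi.single_apply, mul_ite, ite_mul, mul_one, one_mul, mul_zero, zero_mul,
    tsum_ite_eq] at hδ
  rw [← hδ]
  congr 1 with ξ
  rw [cexp_phase_sub]
  ring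

end NuclearKernel

theorem statement10_general (n r : ℕ)
    (p : ℝ≥0∞) (pj qj : Fin r → ℝ≥0∞)
    (hp : 1 ≤ p ∧ p < ⊤)
    (hq : ∀ j, 1 / pj j + 1 / qj j = 1)
    (a : (Fin n → ℤ) → (Fin r → Fin n → ℝ) → ℂ)
    -- `T_a` is nuclear:
    (hnuc : ∃ (h : ℕ → (Fin n → ℤ) → ℂ) (g : ℕ → Fin r → (Fin n → ℤ) → ℂ),
        (∀ k, MemLp (h k) p Measure.count) ∧
        (∀ k j, MemLp (g k j) (qj j) Measure.count) ∧
        (∑' k, eLpNorm (h k) p Measure.count *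
            ∏ j, eLpNorm (g k j) (qj j) Measure.count ≠ ⊤) ∧
        ∀ f : Fin r → (Fin n → ℤ) → ℂ, (∀ j, MemLp (f j) (pj j) Measure.count) →
          ∀ x : Fin n → ℤ,
            (∫ η in Set.univ.pi fun _ : Fin r => Set.univ.pi fun _ : Fin n => Set.Ico (0:ℝ) 1,
                Complex.exp (2 * (π : ℂ) * Complex.I *
                  ((∑ j, ∑ i, (x i : ℝ) * η j i : ℝ) : ℂ)) * a x η *
                ∏ j, ∑' k : Fin n → ℤ,
                  Complex.exp (-2 * (π : ℂ) * Complex.I *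
                    ((∑ i, (k i : ℝ) * η j i : ℝ) : ℂ)) * f j k)
              = ∑' k, (∏ j, ∑' y : Fin n → ℤ, f j y * g k j y) * h k x) :
    elp n p (fun x : Fin n → ℤ =>
      mixedNorm n r qj (fun ℓ : Fin r → Fin n → ℤ =>
        (‖∫ ξ in Set.univ.pi fun _ : Fin r => Set.univ.pi fun _ : Fin n => Set.Ico (0:ℝ) 1,
            a x ξ * Complex.exp (2 * (π : ℂ) * Complex.I *
              ((∑ j, ∑ i, ((x i - ℓ j i : ℤ) : ℝ) * ξ j i : ℝ) : ℂ))‖₊ : ℝ≥0∞))) ≠ ⊤ := by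
  obtain ⟨h, g, -, -, hsum, hrep⟩ := hnuc
  have hqj : ∀ j, 1 ≤ qj j := fun j =>
    have : ENNReal.HolderConjugate (pj j) (qj j) :=
      ENNReal.holderConjugate_iff.2 (by simpa only [one_div] using hq j)
    ENNReal.HolderConjugate.one_le (qj j) (pj j)
  exact ne_top_of_le_ne_top hsum <| elp_mixedNorm_le_of_eq_tsum hp.1 hqj
    fun x => integral_mul_cexp_eq_tsum_of_nuclear fun f hf => hrep f hf x

/-- If `T_a` is nuclear then
`x ↦ ‖∫_{𝕋^{nr}} a(x,ξ)e^{2πi(x̃-ℓ)·ξ}dξ‖_{ℓ^{p₁'}×⋯×ℓ^{p_r'}}` belongs to `ℓ^p(ℤⁿ)`. -/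
theorem statement10 (n r : ℕ) (hn : 1 ≤ n) (hr : 1 ≤ r)
    (p : ℝ≥0∞) (pj qj : Fin r → ℝ≥0∞)
    (hp : 1 ≤ p ∧ p < ⊤) (hpj : ∀ j, 1 ≤ pj j ∧ pj j < ⊤)
    (hq : ∀ j, 1 / pj j + 1 / qj j = 1)
    (a : (Fin n → ℤ) → (Fin r → Fin n → ℝ) → ℂ)
    -- `T_a` is nuclear:
    (hnuc : ∃ (h : ℕ → (Fin n → ℤ) → ℂ) (g : ℕ → Fin r → (Fin n → ℤ) → ℂ),
        (∀ k, MemLp (h k) p Measure.count) ∧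
        (∀ k j, MemLp (g k j) (qj j) Measure.count) ∧
        (∑' k, eLpNorm (h k) p Measure.count *
            ∏ j, eLpNorm (g k j) (qj j) Measure.count ≠ ⊤) ∧
        ∀ f : Fin r → (Fin n → ℤ) → ℂ, (∀ j, MemLp (f j) (pj j) Measure.count) →
          ∀ x : Fin n → ℤ,
            (∫ η in Set.univ.pi fun _ : Fin r => Set.univ.pi fun _ : Fin n => Set.Ico (0:ℝ) 1,
                Complex.exp (2 * (π : ℂ) * Complex.I *
                  ((∑ j, ∑ i, (x i : ℝ) * η j i : ℝ) : ℂ)) * a x η *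
                ∏ j, ∑' k : Fin n → ℤ,
                  Complex.exp (-2 * (π : ℂ) * Complex.I *
                    ((∑ i, (k i : ℝ) * η j i : ℝ) : ℂ)) * f j k)
              = ∑' k, (∏ j, ∑' y : Fin n → ℤ, f j y * g k j y) * h k x) :
    elp n p (fun x : Fin n → ℤ =>
      mixedNorm n r qj (fun ℓ : Fin r → Fin n → ℤ =>
        (‖∫ ξ in Set.univ.pi fun _ : Fin r => Set.univ.pi fun _ : Fin n => Set.Ico (0:ℝ) 1,
            a x ξ * Complex.exp (2 * (π : ℂ) * Complex.I *
              ((∑ j, ∑ i, ((x i - ℓ j i : ℤ) : ℝ) * ξ j i : ℝ) : ℂ))‖₊ : ℝ≥0∞))) ≠ ⊤ :=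
  statement10_general n r p pj qj hp hq a hnuc
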